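/- (Unique global minimizer of the on-policy loss) For a full-support policy π define L(π) = (1/2)·Σ_x ρ(x)·Var_{y∼π(·|x)}(R^π_β(x,·)). Then L(π) ≥ 0 for all full-support π, L(π*) = 0, and if L(π) = 0 for a full-support policy π, then π(·|x) = π*(·|x) for every x with ρ(x) > 0. -/

import Mathlib

/-!
The regularized reward of `π` inverts to `π(y|x) = π_ref(y|x) · exp((r(x,y) − R^π_β(x,y))/β)`.
A variance with full-support weights vanishes exactly when the function is constant, so
`L(π) = 0` forces `R^π_β(x,·)` to be constant on the support of `ρ`; then `π(·|x)` is
proportional to `π_ref(·|x) · exp(r(x,·)/β)`, and normalization leaves only `π*(·|x)`.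
Conversely `R^{π*}_β(x,·) = β log Z(x)`, with `Z(x)` the normalizer of `π*(·|x)`, is constant,
so `L(π*) = 0`.
-/

open Finset

noncomputable section

/-- The optimal regularized policy `π*`. -/
def piStar {X Y : Type*} [Fintype Y] (πref r : X → Y → ℝ) (β : ℝ) (x : X) (y : Y) : ℝ :=
  πref x y * Real.exp (r x y / β) / ∑ y', πref x y' * Real.exp (r x y' / β)

/-- The regularized reward `R^π_β(x,y)`. -/
def Rreg {X Y : Type*} (πref r : X → Y → ℝ) (β : ℝ) (π : X → Y → ℝ) (x : X) (y : Y) : ℝ :=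
  r x y - β * Real.log (π x y / πref x y)

/-- Variance of `f` under the distribution `μ` on a finite type. -/
def Var {Y : Type*} [Fintype Y] (μ : Y → ℝ) (f : Y → ℝ) : ℝ :=
  ∑ y, μ y * (f y - ∑ y', μ y' * f y') ^ 2

/-- On-policy loss `L(π)`. -/
def Lon {X Y : Type*} [Fintype X] [Fintype Y] (ρ : X → ℝ) (πref r : X → Y → ℝ) (β : ℝ)
    (π : X → Y → ℝ) : ℝ :=
  (1 / 2) * ∑ x, ρ x * Var (π x) (Rreg πref r β π x)

section Variance

variable {Y : Type*} [Fintype Y] {μ f : Y → ℝ}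

theorem Var_nonneg (hμ : ∀ y, 0 ≤ μ y) : 0 ≤ Var μ f :=
  sum_nonneg fun y _ => mul_nonneg (hμ y) (sq_nonneg _)

theorem Var_eq_zero_of_forall_eq {c : ℝ} (hμ : ∑ y, μ y = 1) (hf : ∀ y, f y = c) :
    Var μ f = 0 := by
  have hmean : ∑ y, μ y * f y = c := by simp only [hf, ← sum_mul, hμ, one_mul]
  unfold Var
  rw [hmean]
  simp [hf]

theorem eq_mean_of_Var_eq_zero (hμ : ∀ y, 0 < μ y) (h : Var μ f = 0) (y : Y) :
    f y = ∑ y', μ y' * f y' := by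
  have hy := (sum_eq_zero_iff_of_nonneg fun z _ => mul_nonneg (hμ z).le (sq_nonneg _)).mp h y
    (mem_univ y)
  simpa [(hμ y).ne', sub_eq_zero] using hy

end Variance

theorem eq_div_sum_of_eq_mul {Y : Type*} [Fintype Y] {p w : Y → ℝ} {k : ℝ}
    (hp : ∀ y, p y = k * w y) (hsum : ∑ y, p y = 1) (y : Y) : p y = w y / ∑ y', w y' := by
  have hk : k * ∑ y', w y' = 1 := by rw [mul_sum, ← hsum]; simp only [hp]
  rw [hp, eq_div_iff (right_ne_zero_of_mul_eq_one hk)]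
  linear_combination w y * hk

section Policies

variable {X Y : Type*} {πref r π : X → Y → ℝ} {β : ℝ}

theorem mul_exp_sub_Rreg_div {x : X} {y : Y} (hπref : 0 < πref x y) (hπ : 0 < π x y)
    (hβ : β ≠ 0) :
    πref x y * Real.exp ((r x y - Rreg πref r β π x y) / β) = π x y := by
  have hlog : (r x y - Rreg πref r β π x y) / β = Real.log (π x y / πref x y) := by
    rw [Rreg]
    field_simp
    ring
  rw [hlog, Real.exp_log (div_pos hπ hπref), mul_div_cancel₀ _ hπref.ne']

variable [Fintype Y]

def partitionFn (πref r : X → Y → ℝ) (β : ℝ) (x : X) : ℝ :=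
  ∑ y, πref x y * Real.exp (r x y / β)

theorem piStar_eq (x : X) (y : Y) :
    piStar πref r β x y = πref x y * Real.exp (r x y / β) / partitionFn πref r β x := rfl

theorem partitionFn_pos [Nonempty Y] {x : X} (hπref : ∀ y, 0 < πref x y) :
    0 < partitionFn πref r β x :=
  sum_pos (fun y _ => mul_pos (hπref y) (Real.exp_pos _)) univ_nonempty

theorem sum_piStar [Nonempty Y] {x : X} (hπref : ∀ y, 0 < πref x y) :
    ∑ y, piStar πref r β x y = 1 := by
  simp only [piStar_eq, ← sum_div]
  exact div_self (partitionFn_pos hπref).ne'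

theorem Rreg_piStar [Nonempty Y] {x : X} (hπref : ∀ y, 0 < πref x y) (hβ : β ≠ 0) (y : Y) :
    Rreg πref r β (piStar πref r β) x y = β * Real.log (partitionFn πref r β x) := by
  have hZ := partitionFn_pos (r := r) (β := β) hπref
  have hratio : piStar πref r β x y / πref x y =
      Real.exp (r x y / β) / partitionFn πref r β x := by
    rw [piStar_eq]
    field_simp [(hπref y).ne']
  rw [Rreg, hratio, Real.log_div (Real.exp_pos _).ne' hZ.ne', Real.log_exp]
  field_simp
  ring

theorem eq_piStar_of_Rreg_eq_const {x : X} (hπref : ∀ y, 0 < πref x y) (hπ : ∀ y, 0 < π x y)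
    (hβ : β ≠ 0) (hsum : ∑ y, π x y = 1) {c : ℝ}
    (hc : ∀ y, Rreg πref r β π x y = c) (y : Y) : π x y = piStar πref r β x y := by
  refine eq_div_sum_of_eq_mul (w := fun y => πref x y * Real.exp (r x y / β))
    (k := (Real.exp (c / β))⁻¹) (fun y => ?_) hsum y
  rw [← mul_exp_sub_Rreg_div (hπref y) (hπ y) hβ, hc, sub_div, Real.exp_sub]
  ring

end Policies

section Loss

variable {X Y : Type*} [Fintype X] [Fintype Y] {ρ : X → ℝ} {πref r π : X → Y → ℝ} {β : ℝ}

theorem Lon_nonneg (hρ : ∀ x, 0 ≤ ρ x) (hπ : ∀ x y, 0 ≤ π x y) : 0 ≤ Lon ρ πref r β π :=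
  mul_nonneg (by norm_num) (sum_nonneg fun x _ => mul_nonneg (hρ x) (Var_nonneg (hπ x)))

theorem Lon_eq_zero_of_forall_Var_eq_zero (h : ∀ x, Var (π x) (Rreg πref r β π x) = 0) :
    Lon ρ πref r β π = 0 := by
  simp [Lon, h]

theorem Var_eq_zero_of_Lon_eq_zero (hρ : ∀ x, 0 ≤ ρ x) (hπ : ∀ x y, 0 ≤ π x y)
    (hL : Lon ρ πref r β π = 0) {x : X} (hx : 0 < ρ x) :
    Var (π x) (Rreg πref r β π x) = 0 := by
  have hsum : ∑ x, ρ x * Var (π x) (Rreg πref r β π x) = 0 := by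
    simpa [Lon] using hL
  have hterm := (sum_eq_zero_iff_of_nonneg fun x _ =>
    mul_nonneg (hρ x) (Var_nonneg (hπ x))).mp hsum x (mem_univ x)
  exact (mul_eq_zero.mp hterm).resolve_left hx.ne'

end Loss

theorem on_policy_loss_unique_global_minimizer_general
    {X Y : Type*} [Fintype X] [Fintype Y] [Nonempty Y]
    (πref : X → Y → ℝ) (href_pos : ∀ x y, 0 < πref x y)
    (r : X → Y → ℝ) (β : ℝ) (hβ : 0 < β)
    (ρ : X → ℝ) (hρ_nonneg : ∀ x, 0 ≤ ρ x) :
    (∀ π : X → Y → ℝ, (∀ x y, 0 < π x y) → (∀ x, ∑ y, π x y = 1) →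
        0 ≤ Lon ρ πref r β π) ∧
    Lon ρ πref r β (piStar πref r β) = 0 ∧
    (∀ π : X → Y → ℝ, (∀ x y, 0 < π x y) → (∀ x, ∑ y, π x y = 1) →
        Lon ρ πref r β π = 0 →
        ∀ x, 0 < ρ x → ∀ y, π x y = piStar πref r β x y) := by
  refine ⟨fun π hπ _ => Lon_nonneg hρ_nonneg fun x y => (hπ x y).le, ?_, ?_⟩
  · exact Lon_eq_zero_of_forall_Var_eq_zero fun x =>
      Var_eq_zero_of_forall_eq (sum_piStar (href_pos x)) (Rreg_piStar (href_pos x) hβ.ne')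
  · intro π hπ hsum hL x hx
    have hVar := Var_eq_zero_of_Lon_eq_zero hρ_nonneg (fun x y => (hπ x y).le) hL hx
    exact eq_piStar_of_Rreg_eq_const (href_pos x) (hπ x) hβ.ne' (hsum x)
      (eq_mean_of_Var_eq_zero (hπ x) hVar)

/-- `π*` is the unique global minimizer of the on-policy loss. -/
theorem on_policy_loss_unique_global_minimizer
    {X Y : Type*} [Fintype X] [Fintype Y] [Nonempty X] [Nonempty Y]
    (πref : X → Y → ℝ) (href_pos : ∀ x y, 0 < πref x y)
    (href_sum : ∀ x, ∑ y, πref x y = 1)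
    (r : X → Y → ℝ) (β : ℝ) (hβ : 0 < β)
    (ρ : X → ℝ) (hρ_nonneg : ∀ x, 0 ≤ ρ x) (hρ_sum : ∑ x, ρ x = 1) :
    (∀ π : X → Y → ℝ, (∀ x y, 0 < π x y) → (∀ x, ∑ y, π x y = 1) →
        0 ≤ Lon ρ πref r β π) ∧
    Lon ρ πref r β (piStar πref r β) = 0 ∧
    (∀ π : X → Y → ℝ, (∀ x y, 0 < π x y) → (∀ x, ∑ y, π x y = 1) →
        Lon ρ πref r β π = 0 →
        ∀ x, 0 < ρ x → ∀ y, π x y = piStar πref r β x y) :=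
  on_policy_loss_unique_global_minimizer_general πref href_pos r β hβ ρ hρ_nonneg
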